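/- Let $\iota$ be a finite index type. For each $i \in \iota$, let $K_{x_i x_i}, G_x^i \in \mathbb{R}^{n_x \times n_x}$ with each $G_x^i$ invertible, $K_{x_i u}, G_u^i \in \mathbb{R}^{n_x \times n_u}$, $K_{u x_i} \in \mathbb{R}^{n_u \times n_x}$, $K_{uu} \in \mathbb{R}^{n_u \times n_u}$. Set $G_x := \mathrm{blockdiag}_i(G_x^i)$, $G_u := (G_u^i)_i$ stacked, $K := \begin{bmatrix} \mathrm{blockdiag}_i(K_{x_i x_i}) & (K_{x_i u})_i \\ (K_{u x_i})_i & K_{uu} \end{bmatrix}$, and $Z := \begin{bmatrix} -G_x^{-1} G_u \\ I \end{bmatrix}$. Then $Z^\top K Z = K_{uu} - \sum_{i \in \iota} \big[ (G_u^i)^\top (G_x^i)^{-\top} K_{x_i u} + K_{u x_i} (G_x^i)^{-1} G_u^i - (G_u^i)^\top (G_x^i)^{-\top} K_{x_i x_i} (G_x^i)^{-1} G_u^i \big]$. -/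

import Mathlib

/-! With `H = G_x⁻¹ G_u` we have `Z = [-H; I]`, so `Zᵀ K Z = K_uu - (Hᵀ K_xu + K_ux H - Hᵀ K_xx H)`.
Since `G_x` is block diagonal, `H` stacks the blocks `(G_x^i)⁻¹ G_u^i`, and each product of a
stacked matrix with a block-diagonal or a stacked one splits into a sum over the scenarios. -/

open Matrix

namespace Matrix

variable {m n o ι R : Type*}

def stackRows (A : ι → Matrix m n R) : Matrix (m × ι) n R :=
  of fun p j => A p.2 p.1 j

def stackCols (A : ι → Matrix m n R) : Matrix m (n × ι) R :=
  of fun a p => A p.2 a p.1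

theorem transpose_stackRows (A : ι → Matrix m n R) :
    (stackRows A)ᵀ = stackCols fun i => (A i)ᵀ :=
  rfl

section Semiring

variable [NonUnitalNonAssocSemiring R] [Fintype ι] [Fintype n]

theorem stackCols_mul_stackRows (A : ι → Matrix m n R) (B : ι → Matrix n o R) :
    stackCols A * stackRows B = ∑ i, A i * B i := by
  ext a c
  simp only [stackCols, stackRows, mul_apply, of_apply, sum_apply, Fintype.sum_prod_type_right]

theorem blockDiagonal_mul_stackRows [DecidableEq ι] (A : ι → Matrix m n R) (B : ι → Matrix n o R) :
    blockDiagonal A * stackRows B = stackRows fun i => A i * B i := by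
  ext ⟨k, i⟩ c
  simp [stackRows, mul_apply, blockDiagonal_apply, Fintype.sum_prod_type_right]

theorem stackCols_mul_blockDiagonal [DecidableEq ι] (A : ι → Matrix m n R) (B : ι → Matrix n o R) :
    stackCols A * blockDiagonal B = stackCols fun i => A i * B i := by
  ext a ⟨k, i⟩
  simp [stackCols, mul_apply, blockDiagonal_apply, Fintype.sum_prod_type_right]

end Semiring

theorem inv_blockDiagonal [Fintype n] [DecidableEq n] [Fintype ι] [DecidableEq ι] [CommRing R]
    (A : ι → Matrix n n R) (hA : ∀ i, IsUnit (A i).det) :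
    (blockDiagonal A)⁻¹ = blockDiagonal fun i => (A i)⁻¹ := by
  refine inv_eq_right_inv ?_
  rw [← blockDiagonal_mul]
  simp only [fun i => mul_nonsing_inv (A i) (hA i)]
  exact blockDiagonal_one

theorem fromRows_neg_one_transpose_mul_fromBlocks_mul [Fintype m] [Fintype n]
    [DecidableEq n] [Ring R] (H : Matrix m n R) (A : Matrix m m R) (B : Matrix m n R)
    (C : Matrix n m R) (D : Matrix n n R) :
    (fromRows (-H) (1 : Matrix n n R))ᵀ * fromBlocks A B C D * fromRows (-H) (1 : Matrix n n R)
      = D - (Hᵀ * B + C * H - Hᵀ * A * H) := by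
  rw [transpose_fromRows, fromCols_mul_fromBlocks, fromCols_mul_fromRows]
  simp only [transpose_neg, transpose_one, Matrix.mul_neg, Matrix.neg_mul, Matrix.mul_one,
    Matrix.one_mul, Matrix.add_mul]
  abel

end Matrix

/-- Explicit expansion of the reduced block-angular matrix `Zᵀ K Z` as
`Kuu` minus the sum of the per-scenario contributions. -/
theorem reduced_block_angular_matrix_formula {ι : Type*} [Fintype ι] [DecidableEq ι]
    {nx nu : ℕ}
    (Kxx Gxi : ι → Matrix (Fin nx) (Fin nx) ℝ) (hGxi : ∀ i, IsUnit (Gxi i).det)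
    (Kxu Gui : ι → Matrix (Fin nx) (Fin nu) ℝ)
    (Kux : ι → Matrix (Fin nu) (Fin nx) ℝ)
    (Kuu : Matrix (Fin nu) (Fin nu) ℝ)
    (Gx : Matrix (Fin nx × ι) (Fin nx × ι) ℝ) (hGx : Gx = Matrix.blockDiagonal Gxi)
    (Gu : Matrix (Fin nx × ι) (Fin nu) ℝ)
    (hGu : Gu = Matrix.of fun p j => Gui p.2 p.1 j)
    (K : Matrix ((Fin nx × ι) ⊕ Fin nu) ((Fin nx × ι) ⊕ Fin nu) ℝ)
    (hK : K = Matrix.fromBlocks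
      (Matrix.blockDiagonal Kxx)
      (Matrix.of fun p j => Kxu p.2 p.1 j)
      (Matrix.of fun a p => Kux p.2 a p.1)
      Kuu)
    (Z : Matrix ((Fin nx × ι) ⊕ Fin nu) (Fin nu) ℝ)
    (hZ : Z = Matrix.fromRows (-(Gx⁻¹ * Gu)) 1) :
    Zᵀ * K * Z
      = Kuu - ∑ i, ((Gui i)ᵀ * ((Gxi i)⁻¹)ᵀ * Kxu i
          + Kux i * (Gxi i)⁻¹ * Gui i
          - (Gui i)ᵀ * ((Gxi i)⁻¹)ᵀ * Kxx i * (Gxi i)⁻¹ * Gui i) := by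
  have hH : Gx⁻¹ * Gu = stackRows fun i => (Gxi i)⁻¹ * Gui i := by
    rw [hGx, inv_blockDiagonal Gxi hGxi, hGu]
    exact blockDiagonal_mul_stackRows _ _
  change K = fromBlocks (blockDiagonal Kxx) (stackRows Kxu) (stackCols Kux) Kuu at hK
  rw [hZ, hK, hH, fromRows_neg_one_transpose_mul_fromBlocks_mul, transpose_stackRows,
    stackCols_mul_stackRows, stackCols_mul_stackRows, stackCols_mul_blockDiagonal,
    stackCols_mul_stackRows, ← Finset.sum_add_distrib, ← Finset.sum_sub_distrib]
  simp only [transpose_mul, Matrix.mul_assoc]
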